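/- The matching produced by the user-proposing deferred acceptance algorithm in a many-to-one matching game with quotas and strict preferences is stable: there is no pair (m, l) such that m prefers l to μ(m) and l prefers m to some member of μ(l) (or |μ(l)| < q_l and m is acceptable to l). -/

import Mathlib

open scoped Classical

/-- A many-to-one matching market: quotas, users' strict preference lists
(acceptable BSs in decreasing order of preference), and BSs' strict rankings
of users (lower rank = more preferred). -/
structure Market (M L : Type*) where
  quota : L → ℕ
  uPref : M → List L
  bRank : L → M → ℕ

namespace Market

variable {M L : Type*} [Fintype M] [Fintype L]

/-- User `m` strictly prefers BS `l` to BS `l'`. -/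
noncomputable def uPrefers (mk : Market M L) (m : M) (l l' : L) : Prop :=
  l ∈ mk.uPref m ∧
    (mk.uPref m).findIdx (fun x => decide (x = l)) <
      (mk.uPref m).findIdx (fun x => decide (x = l'))

/-- Keep the (up to) `q` best-ranked members of `s`. -/
noncomputable def topQ (q : ℕ) (rank : M → ℕ) (s : Finset M) : Finset M :=
  s.filter (fun m => (s.filter (fun m' => rank m' < rank m)).card < q)

/-- State of the deferred acceptance algorithm: for each user, the set of BSs
it has already proposed to, and for each BS, the set of users it tentatively holds. -/
structure DAState (M L : Type*) where
  proposed : M → Finset L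
  hold : L → Finset M

/-- The most preferred BS that user `m` has not yet proposed to. -/
noncomputable def nextProposal (mk : Market M L) (s : DAState M L) (m : M) : Option L :=
  (mk.uPref m).find? (fun l => decide (l ∉ s.proposed m))

/-- A user is (tentatively) matched if some BS holds it. -/
def matched (s : DAState M L) (m : M) : Prop := ∃ l, m ∈ s.hold l

/-- Users proposing to BS `l` in the current round. -/
noncomputable def proposalsTo (mk : Market M L) (s : DAState M L) (l : L) : Finset M :=
  Finset.univ.filter (fun m => ¬ matched s m ∧ nextProposal mk s m = some l)

/-- One round of user-proposing deferred acceptance: every unmatched user proposes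
to its most preferred BS not yet proposed to; every BS keeps the best applicants
up to its quota (among current holds and new proposers) and rejects the rest. -/
noncomputable def step (mk : Market M L) (s : DAState M L) : DAState M L where
  proposed := fun m =>
    if matched s m then s.proposed m
    else
      match nextProposal mk s m with
      | some l => insert l (s.proposed m)
      | none => s.proposed m
  hold := fun l => topQ (mk.quota l) (mk.bRank l) (s.hold l ∪ proposalsTo mk s l)

/-- The run of the deferred acceptance algorithm from the empty initial state. -/
noncomputable def run (mk : Market M L) : ℕ → DAState M L
  | 0 => ⟨fun _ => ∅, fun _ => ∅⟩
  | n + 1 => step mk (run mk n)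

/-- `μ` is a feasible many-to-one matching: quotas respected, each user assigned
to at most one BS. -/
def IsMatching (mk : Market M L) (μ : L → Finset M) : Prop :=
  (∀ l, (μ l).card ≤ mk.quota l) ∧ ∀ m l l', m ∈ μ l → m ∈ μ l' → l = l'

/-- Individual rationality: every user is assigned only to an acceptable BS. -/
def IndivRational (mk : Market M L) (μ : L → Finset M) : Prop :=
  ∀ l m, m ∈ μ l → l ∈ mk.uPref m

/-- `(m, l)` is a blocking pair for `μ`: `l` is acceptable to `m`, `m` is not
assigned to `l` and strictly prefers `l` to its assignment (if any), and `l`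
either has a free slot or strictly prefers `m` to one of its assigned users. -/
def Blocks (mk : Market M L) (μ : L → Finset M) (m : M) (l : L) : Prop :=
  l ∈ mk.uPref m ∧ m ∉ μ l ∧ (∀ l', m ∈ μ l' → mk.uPrefers m l l') ∧
    ((μ l).card < mk.quota l ∨ ∃ m' ∈ μ l, mk.bRank l m < mk.bRank l m')

/-- Stability: feasible, individually rational, and no blocking pair. -/
def IsStable (mk : Market M L) (μ : L → Finset M) : Prop :=
  IsMatching mk μ ∧ IndivRational mk μ ∧ ∀ m l, ¬ Blocks mk μ m l

end Market

/-!
Two invariants of the run carry the proof. A user who has proposed to `l` has proposed to every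
BS it prefers to `l`, and a BS that has rejected `m` holds `quota`-many users it ranks above `m`;
the latter survives a round because truncating to the best `q` never brings the number of
members ranked above a threshold below `q`. At a fixed point an unmatched user has proposed to
every acceptable BS, so for a blocking pair `(m, l)` the BS `l` has rejected `m` and is full of
users it prefers to `m`: it has neither a free slot nor a member worse than `m`.
-/

theorem List.eq_false_of_findIdx_lt_of_find?_eq_some {α : Type*} [DecidableEq α] {xs : List α}
    {p : α → Bool} {a b : α} (ha : xs.find? p = some a) (hb : b ∈ xs)
    (hba : xs.findIdx (fun x => decide (x = b)) < xs.findIdx (fun x => decide (x = a))) :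
    p b = false := by
  rw [List.find?_eq_getElem?_findIdx] at ha
  obtain ⟨hk, rfl⟩ := List.getElem?_eq_some_iff.1 ha
  have ha_le : xs.findIdx (fun x => decide (x = xs[xs.findIdx p])) ≤ xs.findIdx p :=
    not_lt.1 fun h => by simpa using List.not_of_lt_findIdx h
  have hb_lt : xs.findIdx (fun x => decide (x = b)) < xs.length :=
    List.findIdx_lt_length_of_exists ⟨b, hb, by simp⟩
  have hb_get : xs[xs.findIdx (fun x => decide (x = b))] = b := by
    simpa using List.findIdx_getElem (w := hb_lt)
  rw [← hb_get]
  exact List.not_of_lt_findIdx (hba.trans_le ha_le)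

namespace Market

section TopQ

variable {M : Type*} {q : ℕ} {r : M → ℕ} {s : Finset M}

theorem mem_topQ {x : M} :
    x ∈ topQ q r s ↔ x ∈ s ∧ (s.filter (fun y => r y < r x)).card < q :=
  Finset.mem_filter

theorem topQ_subset : topQ q r s ⊆ s := Finset.filter_subset _ _

theorem card_topQ_le (hr : Function.Injective r) : (topQ q r s).card ≤ q := by
  rcases (topQ q r s).eq_empty_or_nonempty with h | hne
  · simp [h]
  -- everything kept except the worst kept member `x` ranks strictly above `x`
  obtain ⟨x, hx, hmax⟩ := (topQ q r s).exists_max_image r hne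
  have herase : (topQ q r s).erase x ⊆ s.filter (fun y => r y < r x) := fun y hy => by
    obtain ⟨hyx, hy⟩ := Finset.mem_erase.1 hy
    exact Finset.mem_filter.2 ⟨topQ_subset hy, (hmax y hy).lt_of_ne (hr.ne hyx)⟩
  have hle := Finset.card_le_card herase
  rw [Finset.card_erase_of_mem hx] at hle
  have hlt := (mem_topQ.1 hx).2
  omega

theorem le_card_filter_topQ {c : ℕ} (h : q ≤ (s.filter (fun y => r y < c)).card) :
    q ≤ ((topQ q r s).filter (fun y => r y < c)).card := by
  set t := s.filter (fun y => r y < c)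
  by_cases hsub : t ⊆ topQ q r s
  · refine h.trans (Finset.card_le_card fun y hy => ?_)
    exact Finset.mem_filter.2 ⟨hsub hy, (Finset.mem_filter.1 hy).2⟩
  -- the best member `x` of `t` that is cut off: everything in `s` above it is kept
  obtain ⟨x, hx, hmin⟩ := (t \ topQ q r s).exists_min_image r (Finset.sdiff_nonempty.2 hsub)
  obtain ⟨hxt, hxcut⟩ := Finset.mem_sdiff.1 hx
  obtain ⟨hxs, hxc⟩ := Finset.mem_filter.1 hxt
  have hkept : s.filter (fun y => r y < r x) ⊆ (topQ q r s).filter (fun y => r y < c) := by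
    intro z hz
    obtain ⟨hzs, hzx⟩ := Finset.mem_filter.1 hz
    refine Finset.mem_filter.2 ⟨?_, hzx.trans hxc⟩
    by_contra hzcut
    have hzt : z ∈ t := Finset.mem_filter.2 ⟨hzs, hzx.trans hxc⟩
    exact (hmin z (Finset.mem_sdiff.2 ⟨hzt, hzcut⟩)).not_gt hzx
  calc q ≤ (s.filter (fun y => r y < r x)).card := by simpa [mem_topQ, hxs] using hxcut
    _ ≤ _ := Finset.card_le_card hkept

end TopQ

variable {M L : Type*} {mk : Market M L} {s : DAState M L} {m : M} {l : L}

theorem notMem_proposed_of_nextProposal_eq_some (h : nextProposal mk s m = some l) :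
    l ∉ s.proposed m := by
  simpa using List.find?_some h

variable [Fintype M]

theorem mem_proposalsTo :
    m ∈ proposalsTo mk s l ↔ ¬ matched s m ∧ nextProposal mk s m = some l := by
  simp [proposalsTo]

theorem mem_step_proposed :
    l ∈ (step mk s).proposed m ↔ l ∈ s.proposed m ∨ m ∈ proposalsTo mk s l := by
  simp only [step, mem_proposalsTo]
  split_ifs with hm
  · simp [hm]
  · cases hnext : nextProposal mk s m <;> simp [hm, or_comm, eq_comm]

theorem mem_hold_or_mem_proposalsTo_of_mem_step_hold (h : m ∈ (step mk s).hold l) :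
    m ∈ s.hold l ∨ m ∈ proposalsTo mk s l :=
  Finset.mem_union.1 (topQ_subset h)

structure IsDAInvariant (mk : Market M L) (s : DAState M L) : Prop where
  hold_unique : ∀ {m l l'}, m ∈ s.hold l → m ∈ s.hold l' → l = l'
  proposed_of_mem_hold : ∀ {m l}, m ∈ s.hold l → l ∈ s.proposed m
  acceptable_of_proposed : ∀ {m l}, l ∈ s.proposed m → l ∈ mk.uPref m
  proposed_of_uPrefers : ∀ {m l l'}, mk.uPrefers m l l' → l' ∈ s.proposed m →
    l ∈ s.proposed m
  quota_le_of_rejected : ∀ {m l}, l ∈ s.proposed m → m ∉ s.hold l →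
    mk.quota l ≤ ((s.hold l).filter (fun m' => mk.bRank l m' < mk.bRank l m)).card

theorem isDAInvariant_zero : IsDAInvariant mk (run mk 0) where
  hold_unique h := absurd h (Finset.notMem_empty _)
  proposed_of_mem_hold h := absurd h (Finset.notMem_empty _)
  acceptable_of_proposed h := absurd h (Finset.notMem_empty _)
  proposed_of_uPrefers _ h := absurd h (Finset.notMem_empty _)
  quota_le_of_rejected h := absurd h (Finset.notMem_empty _)

theorem isDAInvariant_step (h : IsDAInvariant mk s) : IsDAInvariant mk (step mk s) where
  hold_unique {m l l'} hl hl' := by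
    rcases mem_hold_or_mem_proposalsTo_of_mem_step_hold hl with hl | hl <;>
      rcases mem_hold_or_mem_proposalsTo_of_mem_step_hold hl' with hl' | hl'
    · exact h.hold_unique hl hl'
    · exact absurd ⟨l, hl⟩ (mem_proposalsTo.1 hl').1
    · exact absurd ⟨l', hl'⟩ (mem_proposalsTo.1 hl).1
    · exact Option.some_injective _ ((mem_proposalsTo.1 hl).2.symm.trans (mem_proposalsTo.1 hl').2)
  proposed_of_mem_hold hl := by
    rcases mem_hold_or_mem_proposalsTo_of_mem_step_hold hl with hl | hl
    · exact mem_step_proposed.2 (Or.inl (h.proposed_of_mem_hold hl))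
    · exact mem_step_proposed.2 (Or.inr hl)
  acceptable_of_proposed hl := by
    rcases mem_step_proposed.1 hl with hl | hl
    · exact h.acceptable_of_proposed hl
    · exact List.mem_of_find?_eq_some (mem_proposalsTo.1 hl).2
  proposed_of_uPrefers {m l l'} hpref hl' := by
    refine mem_step_proposed.2 (Or.inl ?_)
    rcases mem_step_proposed.1 hl' with hl' | hl'
    · exact h.proposed_of_uPrefers hpref hl'
    -- `l'` is the first list entry not yet proposed to, and `l` comes earlier
    · simpa using List.eq_false_of_findIdx_lt_of_find?_eq_some
        (mem_proposalsTo.1 hl').2 hpref.1 hpref.2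
  quota_le_of_rejected {m l} hl hrej := by
    refine le_card_filter_topQ ?_
    by_cases hcand : m ∈ s.hold l ∪ proposalsTo mk s l
    · exact not_lt.1 fun hlt => hrej (mem_topQ.2 ⟨hcand, hlt⟩)
    · obtain ⟨hhold, hprop⟩ : m ∉ s.hold l ∧ m ∉ proposalsTo mk s l := by
        simpa using hcand
      have hl : l ∈ s.proposed m := (mem_step_proposed.1 hl).resolve_right hprop
      exact (h.quota_le_of_rejected hl hhold).trans
        (Finset.card_le_card (Finset.filter_subset_filter _ Finset.subset_union_left))

theorem isDAInvariant_run (mk : Market M L) : ∀ n, IsDAInvariant mk (run mk n)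
  | 0 => isDAInvariant_zero
  | n + 1 => isDAInvariant_step (isDAInvariant_run mk n)

theorem mem_proposed_of_step_eq (hfix : step mk s = s) (hm : ¬ matched s m)
    (hl : l ∈ mk.uPref m) : l ∈ s.proposed m := by
  cases hnext : nextProposal mk s m with
  | none => simpa using List.find?_eq_none.1 hnext l hl
  | some l' =>
    have hl' : l' ∈ (step mk s).proposed m :=
      mem_step_proposed.2 (Or.inr (mem_proposalsTo.2 ⟨hm, hnext⟩))
    rw [hfix] at hl'
    exact absurd hl' (notMem_proposed_of_nextProposal_eq_some hnext)

theorem card_hold_le_of_step_eq (hfix : step mk s = s) (hB : Function.Injective (mk.bRank l)) :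
    (s.hold l).card ≤ mk.quota l := by
  rw [← hfix]
  exact card_topQ_le hB

theorem IsDAInvariant.not_blocks (h : IsDAInvariant mk s) (hfix : step mk s = s)
    (hB : Function.Injective (mk.bRank l)) : ¬ Blocks mk s.hold m l := by
  rintro ⟨hacc, hnot, hpref, hslot⟩
  have hl : l ∈ s.proposed m := by
    by_cases hm : matched s m
    · obtain ⟨l', hl'⟩ := hm
      exact h.proposed_of_uPrefers (hpref l' hl') (h.proposed_of_mem_hold hl')
    · exact mem_proposed_of_step_eq hfix hm hacc
  have hfull := h.quota_le_of_rejected hl hnot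
  have hcard := card_hold_le_of_step_eq hfix hB
  have hall : ∀ m' ∈ s.hold l, mk.bRank l m' < mk.bRank l m :=
    Finset.card_filter_eq_iff.1 (le_antisymm (Finset.card_filter_le _ _) (hcard.trans hfull))
  rcases hslot with hfree | ⟨m', hm', hlt⟩
  · exact absurd (hfull.trans (Finset.card_filter_le _ _)) hfree.not_ge
  · exact absurd (hall m' hm') hlt.not_gt

theorem IsDAInvariant.isStable (h : IsDAInvariant mk s) (hfix : step mk s = s)
    (hB : ∀ l, Function.Injective (mk.bRank l)) : IsStable mk s.hold :=
  ⟨⟨fun l => card_hold_le_of_step_eq hfix (hB l), fun _ _ _ => h.hold_unique⟩,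
    fun _ _ hm => h.acceptable_of_proposed (h.proposed_of_mem_hold hm),
    fun _ l => h.not_blocks hfix (hB l)⟩

end Market

theorem da_stable_general {M L : Type*} [Fintype M] (mk : Market M L)
    (hB : ∀ l, Function.Injective (mk.bRank l))
    (n : ℕ) (hterm : Market.step mk (Market.run mk n) = Market.run mk n) :
    Market.IsStable mk (Market.run mk n).hold :=
  (Market.isDAInvariant_run mk n).isStable hterm hB

/-- The matching produced by user-proposing deferred acceptance
(with quotas and strict preferences) is stable: no blocking pair exists. -/
theorem da_stable {M L : Type*} [Fintype M] [Fintype L] (mk : Market M L)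
    (hU : ∀ m, (mk.uPref m).Nodup) (hB : ∀ l, Function.Injective (mk.bRank l))
    (n : ℕ) (hterm : Market.step mk (Market.run mk n) = Market.run mk n) :
    Market.IsStable mk (Market.run mk n).hold :=
  da_stable_general mk hB n hterm
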